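/- arXiv:2203.06453 — 7 statements merged into one kernel-verified Lean document; each statement's English description precedes it below -/
import Mathlib

section
/- Let B be the 3×3 integer matrix with rows (-1,7,0), (-1,-1,0), (0,0,1), and A = (B + Bᵀ)/2. Suppose x0, x1, and x2 := t·x1 - x0 are in ℤ³ with x0ᵀ A x0 = x1ᵀ A x1 = 8, x0ᵀ A x1 = 4t, and x0ᵀ B x1 = 0. Then x1ᵀ B x2 = 0. -/
open Matrix

/-- The matrix `B` with rows `(-1,7,0)`, `(-1,-1,0)`, `(0,0,1)`. -/
def Bmat : Matrix (Fin 3) (Fin 3) ℤ := !![-1, 7, 0; -1, -1, 0; 0, 0, 1]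

theorem stmt1 (A : Matrix (Fin 3) (Fin 3) ℤ) (hA : A + A = Bmat + Bmatᵀ)
    (x0 x1 : Fin 3 → ℤ) (t : ℤ)
    (h0 : x0 ⬝ᵥ A.mulVec x0 = 8)
    (h1 : x1 ⬝ᵥ A.mulVec x1 = 8)
    (h01 : x0 ⬝ᵥ A.mulVec x1 = 4 * t)
    (hB : x0 ⬝ᵥ Bmat.mulVec x1 = 0) :
    x1 ⬝ᵥ Bmat.mulVec (t • x1 - x0) = 0 := by
  have hBB : Bmat + Bmatᵀ = !![-2,6,0;6,-2,0;0,0,2] := by decide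
  rw [hBB] at hA
  have e : ∀ i j, (A+A) i j = (!![-2,6,0;6,-2,0;0,0,2] : Matrix (Fin 3) (Fin 3) ℤ) i j := fun i j => by rw [hA]
  have a00 : A 0 0 = -1 := by have := e 0 0; simp at this; omega
  have a01 : A 0 1 = 3 := by have := e 0 1; simp at this; omega
  have a02 : A 0 2 = 0 := by have := e 0 2; simp at this; omega
  have a10 : A 1 0 = 3 := by have := e 1 0; simp at this; omega
  have a11 : A 1 1 = -1 := by have := e 1 1; simp at this; omega
  have a12 : A 1 2 = 0 := by have := e 1 2; simp at this; omega
  have a20 : A 2 0 = 0 := by have := e 2 0; simp at this; omega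
  have a21 : A 2 1 = 0 := by have := e 2 1; simp at this; omega
  have a22 : A 2 2 = 1 := by have := e 2 2; simp at this; omega
  simp only [Bmat, mulVec, dotProduct, Fin.sum_univ_three, Matrix.cons_val_zero,
    Matrix.cons_val_one, Matrix.head_cons, Matrix.cons_val_two, Matrix.tail_cons,
    Matrix.head_fin_const, Pi.sub_apply, Pi.smul_apply, smul_eq_mul,
    Matrix.of_apply, a00, a01, a02, a10, a11, a12, a20, a21, a22] at h1 h01 hB ⊢
  linear_combination t * h1 - 2 * h01 + hB
end

section
/- Let p, q, p', q' be positive reals with 3 + 2√2 < p'/q' < p/q, suppose pq' - p'q ≥ 2, and √2·p' > p. Let w' > 1 be the unique real number greater than 1 satisfying w' + 1/w' = ((p')² + (q')² + 2)/(p'q' - 1). Then w' < p/q. -/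
set_option maxHeartbeats 1000000 in
theorem stmt4 (p q p' q' w' : ℝ)
    (hp : 0 < p) (hq : 0 < q) (hp' : 0 < p') (hq' : 0 < q')
    (h1 : 3 + 2 * Real.sqrt 2 < p' / q') (h2 : p' / q' < p / q)
    (h3 : 2 ≤ p * q' - p' * q) (h4 : Real.sqrt 2 * p' > p)
    (hw : 1 < w')
    (hweq : w' + 1 / w' = (p' ^ 2 + q' ^ 2 + 2) / (p' * q' - 1)) :
    w' < p / q := by
  set s := Real.sqrt 2 with hs
  have hs2 : s ^ 2 = 2 := Real.sq_sqrt (by norm_num)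
  have hs0 : (0:ℝ) < s := Real.sqrt_pos.mpr (by norm_num)
  have hs32 : s < 3/2 := by nlinarith
  have hs43 : 4/3 < s := by nlinarith
  have h1' : (3 + 2*s) * q' < p' := (lt_div_iff₀ hq').mp h1
  have h2' : p' * q < p * q' := by
    rwa [div_lt_div_iff₀ hq' hq] at h2
  have hkpos : (0:ℝ) < 3 - 2*s := by linarith
  have hk : q' < (3 - 2*s) * p' := by nlinarith [h1']
  have hqk : q < (3 - 2*s) * p := by
    have hlt : q * p' < (3 - 2*s) * p * p' := by nlinarith [mul_pos hp hq']
    exact lt_of_mul_lt_mul_right hlt hp'.le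
  have hwpos : (0:ℝ) < w' := by linarith
  -- p' q' > 1
  have hd : (0:ℝ) < p' * q' - 1 := by
    by_contra h
    push_neg at h
    have hnum : (0:ℝ) < p' ^ 2 + q' ^ 2 + 2 := by positivity
    have hle : (p' ^ 2 + q' ^ 2 + 2) / (p' * q' - 1) ≤ 0 :=
      div_nonpos_iff.mpr (Or.inl ⟨hnum.le, h⟩)
    have hpos : (0:ℝ) < w' + 1 / w' := by positivity
    rw [hweq] at hpos
    linarith
  -- estimates toward (p+q)^2 < 2*(p*p' - q*q')
  have hqq' : q * q' < (17 - 12*s) * (p * p') := by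
    have t1 : q * q' < ((3 - 2*s) * p) * q' := mul_lt_mul_of_pos_right hqk hq'
    have t2 : ((3 - 2*s) * p) * q' < ((3 - 2*s) * p) * ((3 - 2*s) * p') :=
      mul_lt_mul_of_pos_left hk (by positivity)
    have t3 : ((3 - 2*s) * p) * ((3 - 2*s) * p') = (17 - 12*s) * (p * p') := by
      linear_combination 4 * p * p' * hs2
    linarith
  have hpq2 : (p + q) ^ 2 < (24 - 16*s) * p ^ 2 := by
    have t1 : p + q < (4 - 2*s) * p := by linarith
    have t2 : (p + q) ^ 2 < ((4 - 2*s) * p) ^ 2 :=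
      pow_lt_pow_left₀ t1 (by positivity) (by norm_num)
    have t3 : ((4 - 2*s) * p) ^ 2 = (24 - 16*s) * p ^ 2 := by
      linear_combination 4 * p ^ 2 * hs2
    linarith
  have hpp' : (24 - 16*s) * p ^ 2 < (24*s - 32) * (p * p') := by
    have c1 : (0:ℝ) < (24 - 16*s) * p := by nlinarith
    have t1 : ((24 - 16*s) * p) * p < ((24 - 16*s) * p) * (s * p') :=
      mul_lt_mul_of_pos_left h4 c1
    have t2 : ((24 - 16*s) * p) * (s * p') = (24*s - 32) * (p * p') := by
      linear_combination (-16) * p * p' * hs2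
    nlinarith [t1, t2]
  have hmain : (p + q) ^ 2 < 2 * (p * p' - q * q') := by linarith
  have hB : (0:ℝ) < p * p' - q * q' := by nlinarith [sq_nonneg (p + q)]
  have hE : (p + q) ^ 2 < (p * q' - p' * q) * (p * p' - q * q') := by
    have := mul_le_mul_of_nonneg_right (by linarith : (2:ℝ) ≤ p * q' - p' * q) hB.le
    linarith
  have hid : (p ^ 2 + q ^ 2) * (p' * q' - 1) - (p' ^ 2 + q' ^ 2 + 2) * (p * q)
      = (p * q' - p' * q) * (p * p' - q * q') - (p + q) ^ 2 := by ring
  have hkey : (p' ^ 2 + q' ^ 2 + 2) * (p * q) < (p ^ 2 + q ^ 2) * (p' * q' - 1) := by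
    linarith only [hid, hE]
  have hfrac : (p' ^ 2 + q' ^ 2 + 2) / (p' * q' - 1) < (p ^ 2 + q ^ 2) / (p * q) := by
    rw [div_lt_div_iff₀ hd (mul_pos hp hq)]
    linarith only [hkey]
  have hsplit : (p ^ 2 + q ^ 2) / (p * q) = p / q + q / p := by
    field_simp
  have hw2 : w' + 1 / w' < p / q + q / p := by
    rw [hweq, ← hsplit]; exact hfrac
  have ht : 1 < p / q := by linarith
  have tpos : 0 < p / q := by linarith
  -- monotonicity of x + 1/x on (1, ∞)
  by_contra hcon
  push_neg at hcon
  have hprod : 0 ≤ (w' - p / q) * (w' * (p / q) - 1) := by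
    have h1p : 0 ≤ w' - p / q := by linarith
    have h2p : 0 ≤ w' * (p / q) - 1 := by nlinarith
    exact mul_nonneg h1p h2p
  have l1 : (w' + 1 / w') * (w' * (p / q)) = w' ^ 2 * (p / q) + (p / q) := by
    field_simp
  have l2 : (p / q + q / p) * (w' * (p / q)) = w' * (p / q) ^ 2 + w' := by
    field_simp
  have l3 : (w' + 1 / w') * (w' * (p / q)) < (p / q + q / p) * (w' * (p / q)) :=
    mul_lt_mul_of_pos_right hw2 (mul_pos hwpos tpos)
  nlinarith [hprod, l1, l2, l3]
end

section
/- For integers p > q ≥ 1 with gcd(p,q) = 1, let W(p/q) = (w₁,…,w_N) be the integral weight expansion of p/q. Then Σᵢ wᵢ = p + q - 1 and Σᵢ wᵢ² = pq. -/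
/-- Auxiliary fuelled recursion computing the weight expansion of the rectangle `(a, b)`:
at each step the smaller side is recorded and subtracted from the larger. -/
def wlAux : ℕ → ℕ → ℕ → List ℕ
  | 0, _, _ => []
  | fuel + 1, a, b =>
    if a = 0 ∨ b = 0 then []
    else if a ≤ b then a :: wlAux fuel a (b - a)
    else b :: wlAux fuel (a - b) b

/-- The integral weight expansion `W(p/q)` of the rational number `p/q`. -/
def weightList (p q : ℕ) : List ℕ := wlAux (p + q) p q

lemma wlAux_spec : ∀ fuel a b, a + b ≤ fuel → 1 ≤ a → 1 ≤ b → Nat.Coprime a b →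
    (wlAux fuel a b).sum = a + b - 1 ∧
      ((wlAux fuel a b).map (fun w => w ^ 2)).sum = a * b := by
  intro fuel
  induction fuel with
  | zero => intro a b hf ha hb _; omega
  | succ n ih =>
    intro a b hf ha hb hcop
    have ha0 : a ≠ 0 := by omega
    have hb0 : b ≠ 0 := by omega
    by_cases hab : a ≤ b
    · rcases eq_or_lt_of_le hab with heq | hlt
      · -- a = b, coprime forces a = 1
        have ha1 : a = 1 := by
          have := hcop
          rw [← heq] at this
          rwa [Nat.Coprime, Nat.gcd_self] at this
        subst heq
        subst ha1
        simp [wlAux]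
        cases n with
        | zero => simp [wlAux]
        | succ m => simp [wlAux]
      · have hsub : Nat.Coprime a (b - a) := by
          have : Nat.gcd a (b - a) = Nat.gcd a b := by
            conv_rhs => rw [← Nat.sub_add_cancel (le_of_lt hlt)]
            rw [Nat.gcd_add_self_right]
          unfold Nat.Coprime
          rw [this]; exact hcop
        have hrec := ih a (b - a) (by omega) ha (by omega) hsub
        simp only [wlAux, ha0, hb0, hab, if_true, or_self, if_false, List.sum_cons,
          List.map_cons, ite_false, ite_true]
        constructor
        · omega
        · rw [hrec.2]
          have h1 : a * (b - a) = a * b - a * a := Nat.mul_sub a b a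
          have h2 : a * a ≤ a * b := Nat.mul_le_mul_left a hab
          have : a ^ 2 = a * a := sq a
          omega
    · push_neg at hab
      have hsub : Nat.Coprime (a - b) b := by
        have : Nat.gcd (a - b) b = Nat.gcd a b := by
          conv_rhs => rw [← Nat.sub_add_cancel (le_of_lt hab)]
          rw [Nat.gcd_add_self_left]
        unfold Nat.Coprime
        rw [this]; exact hcop
      have hrec := ih (a - b) b (by omega) (by omega) hb hsub
      simp only [wlAux]
      rw [if_neg (by tauto), if_neg (by omega)]
      simp only [List.sum_cons, List.map_cons]
      constructor
      · omega
      · rw [hrec.2]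
        have h1 : (a - b) * b = a * b - b * b := Nat.sub_mul a b b
        have h2 : b * b ≤ a * b := Nat.mul_le_mul_right b (le_of_lt hab)
        have : b ^ 2 = b * b := sq b
        omega

theorem stmt10 (p q : ℕ) (hq : 1 ≤ q) (hpq : q < p) (hcop : Nat.Coprime p q) :
    (weightList p q).sum = p + q - 1 ∧
      ((weightList p q).map (fun w => w ^ 2)).sum = p * q := by
  exact wlAux_spec (p + q) p q le_rfl (by omega) hq hcop
end

section
/- For any two rationals p/q > 1 and p'/q' > 1 (in lowest terms) with weight expansions W(p/q) and W(p'/q') padded with zeros to the same length, the dot product satisfies W(p/q) · W(p'/q') ≥ min(pq', p'q). -/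
/-- Dot product of two lists, the shorter one implicitly padded with zeros. -/
def listDot : List ℕ → List ℕ → ℕ
  | a :: as, b :: bs => a * b + listDot as bs
  | _, _ => 0

lemma wlAux_eq : ∀ fuel fuel' a b, a + b ≤ fuel → a + b ≤ fuel' →
    wlAux fuel a b = wlAux fuel' a b := by
  intro fuel
  induction fuel with
  | zero =>
    intro fuel' a b h h'
    have ha : a = 0 := by omega
    have hb : b = 0 := by omega
    subst ha; subst hb
    cases fuel' <;> simp [wlAux]
  | succ n ih =>
    intro fuel' a b h h'
    cases fuel' with
    | zero =>
      have ha : a = 0 := by omega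
      have hb : b = 0 := by omega
      subst ha; subst hb
      simp [wlAux]
    | succ m =>
      simp only [wlAux]
      by_cases h0 : a = 0 ∨ b = 0
      · simp [h0]
      · simp only [h0, if_false]
        push_neg at h0
        by_cases hab : a ≤ b
        · simp only [hab, if_true]
          rw [ih m a (b - a) (by omega) (by omega)]
        · simp only [hab, if_false]
          rw [ih m (a - b) b (by omega) (by omega)]

lemma weightList_step_le {a b : ℕ} (ha : 1 ≤ a) (h : a ≤ b) :
    weightList a b = a :: weightList a (b - a) := by
  unfold weightList
  obtain ⟨k, hk⟩ : ∃ k, a + b = k + 1 := ⟨a + b - 1, by omega⟩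
  rw [hk]
  simp only [wlAux]
  have h0 : ¬ (a = 0 ∨ b = 0) := by omega
  simp only [h0, if_false, h, if_true]
  rw [wlAux_eq k (a + (b - a)) a (b - a) (by omega) le_rfl]

lemma weightList_step_gt {a b : ℕ} (hb : 1 ≤ b) (h : b < a) :
    weightList a b = b :: weightList (a - b) b := by
  unfold weightList
  obtain ⟨k, hk⟩ : ∃ k, a + b = k + 1 := ⟨a + b - 1, by omega⟩
  rw [hk]
  simp only [wlAux]
  have h0 : ¬ (a = 0 ∨ b = 0) := by omega
  have hab : ¬ a ≤ b := by omega
  simp only [h0, if_false, hab]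
  rw [wlAux_eq k ((a - b) + b) (a - b) b (by omega) le_rfl]

lemma listDot_cons (a a' : ℕ) (l l' : List ℕ) :
    listDot (a :: l) (a' :: l') = a * a' + listDot l l' := rfl

lemma weight_dot_key : ∀ n a b a' b', a + b ≤ n →
    min (a * b') (a' * b) ≤ listDot (weightList a b) (weightList a' b') := by
  intro n
  induction n with
  | zero =>
    intro a b a' b' h
    have ha : a = 0 := by omega
    subst ha
    simp
  | succ n ih =>
    intro a b a' b' h
    by_cases hz : a = 0 ∨ b = 0 ∨ a' = 0 ∨ b' = 0
    · rcases hz with h1 | h1 | h1 | h1 <;> subst h1 <;> simp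
    · push_neg at hz
      obtain ⟨ha, hb, ha', hb'⟩ := hz
      rcases le_or_gt a b with hab | hab <;> rcases le_or_gt a' b' with hab' | hab'
      · rw [weightList_step_le (by omega) hab, weightList_step_le (by omega) hab',
          listDot_cons]
        have hD := ih a (b - a) a' (b' - a') (by omega)
        have e1 : a * (b' - a') = a * b' - a * a' := by
          rw [Nat.mul_sub]
        have e2 : a' * (b - a) = a' * b - a' * a := by
          rw [Nat.mul_sub]
        have c1 : a * a' ≤ a * b' := Nat.mul_le_mul_left _ hab'
        have c2 : a' * a ≤ a' * b := Nat.mul_le_mul_left _ hab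
        have hc : a * a' = a' * a := Nat.mul_comm _ _
        rw [e1, e2] at hD
        omega
      · rw [weightList_step_le (by omega) hab, weightList_step_gt (by omega) hab',
          listDot_cons]
        exact le_trans (min_le_left _ _) (Nat.le_add_right _ _)
      · rw [weightList_step_gt (by omega) hab, weightList_step_le (by omega) hab',
          listDot_cons]
        rw [Nat.mul_comm b a']
        exact le_trans (min_le_right _ _) (Nat.le_add_right _ _)
      · rw [weightList_step_gt (by omega) hab, weightList_step_gt (by omega) hab',
          listDot_cons]
        have hD := ih (a - b) b (a' - b') b' (by omega)
        have e1 : (a - b) * b' = a * b' - b * b' := by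
          rw [Nat.sub_mul]
        have e2 : (a' - b') * b = a' * b - b' * b := by
          rw [Nat.sub_mul]
        have c1 : b * b' ≤ a * b' := Nat.mul_le_mul_right _ (by omega)
        have c2 : b' * b ≤ a' * b := Nat.mul_le_mul_right _ (by omega)
        have hc : b * b' = b' * b := Nat.mul_comm _ _
        rw [e1, e2] at hD
        omega

theorem stmt11 (p q p' q' : ℕ)
    (hq : 1 ≤ q) (hpq : q < p) (hcop : Nat.Coprime p q)
    (hq' : 1 ≤ q') (hpq' : q' < p') (hcop' : Nat.Coprime p' q') :
    min (p * q') (p' * q) ≤ listDot (weightList p q) (weightList p' q') := by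
  exact weight_dot_key (p + q) p q p' q' le_rfl
end

section
/- In any generating triple (E_λ, E_μ, E_ρ) one has the identities t_ρ r_μ - t_μ r_ρ = 8 p_λ and t_λ r_μ - t_μ r_λ = 8 q_ρ, where r_• := p_• + q_•. Deduce that 8 d_μ t_ρ - 8 d_ρ t_μ = 24 p_λ and 8 m_ρ d_μ - 8 m_μ d_ρ = 8 ε p_λ, using 8d_• = 3r_• + ε t_• and 8m_• = r_• + 3ε t_•. -/
theorem stmt13 (pl ql tl pm qm tm pr qr tr dMu dRho mMu mRho ε : ℚ)
    (hε : ε = 1 ∨ ε = -1)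
    (hql : 0 < ql) (hqm : 0 < qm) (hqr : 0 < qr)
    (horder1 : pl / ql < pm / qm) (horder2 : pm / qm < pr / qr)
    (hadjLR : (pl + ql) * (pr + qr) - tl * tr = 8 * pl * qr)
    (hadjLM : (pl + ql) * (pm + qm) - tl * tm = 8 * pl * qm)
    (htr : tr = ql * pm - pl * qm)
    (hadjMR : (pm + qm) * (pr + qr) - tm * tr = 8 * pm * qr)
    (htl : tl = qm * pr - pm * qr)
    (hd : tl * tr - tm = ql * pr - pl * qr)
    (hdMu : 8 * dMu = 3 * (pm + qm) + ε * tm)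
    (hdRho : 8 * dRho = 3 * (pr + qr) + ε * tr)
    (hmMu : 8 * mMu = (pm + qm) + 3 * ε * tm)
    (hmRho : 8 * mRho = (pr + qr) + 3 * ε * tr) :
    tr * (pm + qm) - tm * (pr + qr) = 8 * pl ∧
    tl * (pm + qm) - tm * (pl + ql) = 8 * qr ∧
    8 * dMu * tr - 8 * dRho * tm = 24 * pl ∧
    8 * mRho * dMu - 8 * mMu * dRho = 8 * ε * pl := by
  have htrpos : 0 < tr := by
    rw [div_lt_div_iff₀ hql hqm] at horder1
    rw [htr]; nlinarith
  have htlpos : 0 < tl := by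
    rw [div_lt_div_iff₀ hqm hqr] at horder2
    rw [htl]; nlinarith
  have hG1 : tr * (pm + qm) - tm * (pr + qr) = 8 * pl := by
    have h : tl * (tr * (pm + qm) - tm * (pr + qr)) = tl * (8 * pl) := by
      linear_combination (-(pm + qm)) * hadjLR + (pr + qr) * hadjLM + (-8 * pl) * htl
    exact mul_left_cancel₀ (ne_of_gt htlpos) h
  have hG2 : tl * (pm + qm) - tm * (pl + ql) = 8 * qr := by
    have h : tr * (tl * (pm + qm) - tm * (pl + ql)) = tr * (8 * qr) := by
      linear_combination (-(pm + qm)) * hadjLR + (pl + ql) * hadjMR + (-8 * qr) * htr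
    exact mul_left_cancel₀ (ne_of_gt htrpos) h
  refine ⟨hG1, hG2, ?_, ?_⟩
  · linear_combination tr * hdMu - tm * hdRho + 3 * hG1
  · linear_combination (1/8) * ((8 * dMu) * hmRho + ((pr + qr) + 3 * ε * tr) * hdMu
      - (8 * dRho) * hmMu - ((pm + qm) + 3 * ε * tm) * hdRho + 8 * ε * hG1)
end

section
/- Suppose (E_λ, E_μ, E_ρ) is a generating triple. Then the classes (E_λ, E_{xμ}, E_μ), where E_{xμ} has coordinates (p_{xμ}, q_{xμ}, t_{xμ}) = t_λ·(p_μ, q_μ, t_μ) - (p_ρ, q_ρ, t_ρ), satisfy: p_λ/q_λ < p_{xμ}/q_{xμ} < p_μ/q_μ, the pair (E_λ, E_{xμ}) is adjacent and t_μ-compatible (i.e. q_λ p_{xμ} - p_λ q_{xμ} = t_μ), and t_λ t_μ - t_{xμ} = q_λ p_μ - p_λ q_μ. -/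
theorem stmt14 (pl ql tl pm qm tm pr qr tr : ℤ)
    (hql : 0 < ql) (hqm : 0 < qm) (hqr : 0 < qr)
    (hquadL : pl ^ 2 - 6 * pl * ql + ql ^ 2 + 8 = tl ^ 2)
    (hquadM : pm ^ 2 - 6 * pm * qm + qm ^ 2 + 8 = tm ^ 2)
    (hquadR : pr ^ 2 - 6 * pr * qr + qr ^ 2 + 8 = tr ^ 2)
    (htl3 : 3 ≤ tl) (htm3 : 3 ≤ tm) (htr3 : 3 ≤ tr)
    (horder1 : (pl : ℚ) / (ql : ℚ) < (pm : ℚ) / (qm : ℚ))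
    (horder2 : (pm : ℚ) / (qm : ℚ) < (pr : ℚ) / (qr : ℚ))
    (hadjLM : (pl + ql) * (pm + qm) - tl * tm = 8 * pl * qm)
    (hadjMR : (pm + qm) * (pr + qr) - tm * tr = 8 * pm * qr)
    (hadjLR : (pl + ql) * (pr + qr) - tl * tr = 8 * pl * qr)
    (htr : tr = ql * pm - pl * qm)
    (htl : tl = qm * pr - pm * qr)
    (hd : tl * tr - tm = ql * pr - pl * qr) :
    (pl : ℚ) / (ql : ℚ) < ((tl * pm - pr : ℤ) : ℚ) / ((tl * qm - qr : ℤ) : ℚ) ∧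
    ((tl * pm - pr : ℤ) : ℚ) / ((tl * qm - qr : ℤ) : ℚ) < (pm : ℚ) / (qm : ℚ) ∧
    (pl + ql) * ((tl * pm - pr) + (tl * qm - qr)) - tl * (tl * tm - tr) =
        8 * pl * (tl * qm - qr) ∧
    ql * (tl * pm - pr) - pl * (tl * qm - qr) = tm ∧
    tl * tm - (tl * tm - tr) = ql * pm - pl * qm := by
  have hA : ql * (tl * pm - pr) - pl * (tl * qm - qr) = tm := by
    linear_combination hd - tl * htr
  have hB : pm * (tl * qm - qr) - (tl * pm - pr) * qm = tl := by
    linear_combination -htl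
  have hkey : tr * (tl * qm - qr) = qm * tm + ql * tl := by
    linear_combination qm * hA + ql * hB + (tl * qm - qr) * htr
  have hqx : 0 < tl * qm - qr := by nlinarith
  have hqxQ : (0 : ℚ) < ((tl * qm - qr : ℤ) : ℚ) := by exact_mod_cast hqx
  have hqlQ : (0 : ℚ) < (ql : ℚ) := by exact_mod_cast hql
  have hqmQ : (0 : ℚ) < (qm : ℚ) := by exact_mod_cast hqm
  refine ⟨?_, ?_, by linear_combination tl * hadjLM - hadjLR, hA, by linarith⟩
  · rw [div_lt_div_iff₀ hqlQ hqxQ]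
    have : (0:ℚ) < (tm:ℚ) := by exact_mod_cast (by linarith : (0:ℤ) < tm)
    have hAQ : (ql : ℚ) * ((tl * pm - pr : ℤ) : ℚ) - (pl : ℚ) * ((tl * qm - qr : ℤ) : ℚ) = (tm : ℚ) := by
      exact_mod_cast congrArg (fun x : ℤ => (x : ℚ)) hA
    nlinarith
  · rw [div_lt_div_iff₀ hqxQ hqmQ]
    have : (0:ℚ) < (tl:ℚ) := by exact_mod_cast (by linarith : (0:ℤ) < tl)
    have hBQ : (pm : ℚ) * ((tl * qm - qr : ℤ) : ℚ) - ((tl * pm - pr : ℤ) : ℚ) * (qm : ℚ) = (tl : ℚ) := by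
      exact_mod_cast congrArg (fun x : ℤ => (x : ℚ)) hB
    nlinarith
end

section
/- For every n ≥ 0, the three triples (p,q,t) = (2n+6, 1, 2n+3), (4n²+22n+29, 2n+4, 4n²+16n+13), and (2n+8, 1, 2n+5) each satisfy p² - 6pq + q² + 8 = t², and they form a generating triple: consecutive and outer pairs are adjacent ((p+q)(p'+q') - tt' = 8pq' for each pair ordered by increasing center), 2n+5 = 1·(4n²+22n+29) - (2n+6)(2n+4), 2n+3 = (2n+4)(2n+8) - (4n²+22n+29)·1, and (2n+3)(2n+5) - (4n²+16n+13) = 1·(2n+8) - (2n+6)·1. -/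
theorem stmt15 (n : ℤ) (hn : 0 ≤ n) :
    ((2 * n + 6) ^ 2 - 6 * (2 * n + 6) * 1 + 1 ^ 2 + 8 = (2 * n + 3) ^ 2) ∧
    ((4 * n ^ 2 + 22 * n + 29) ^ 2 - 6 * (4 * n ^ 2 + 22 * n + 29) * (2 * n + 4) +
        (2 * n + 4) ^ 2 + 8 = (4 * n ^ 2 + 16 * n + 13) ^ 2) ∧
    ((2 * n + 8) ^ 2 - 6 * (2 * n + 8) * 1 + 1 ^ 2 + 8 = (2 * n + 5) ^ 2) ∧
    (((2 * n + 6) + 1) * ((4 * n ^ 2 + 22 * n + 29) + (2 * n + 4)) -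
        (2 * n + 3) * (4 * n ^ 2 + 16 * n + 13) = 8 * (2 * n + 6) * (2 * n + 4)) ∧
    (((4 * n ^ 2 + 22 * n + 29) + (2 * n + 4)) * ((2 * n + 8) + 1) -
        (4 * n ^ 2 + 16 * n + 13) * (2 * n + 5) = 8 * (4 * n ^ 2 + 22 * n + 29) * 1) ∧
    (((2 * n + 6) + 1) * ((2 * n + 8) + 1) - (2 * n + 3) * (2 * n + 5) =
        8 * (2 * n + 6) * 1) ∧
    (2 * n + 5 = 1 * (4 * n ^ 2 + 22 * n + 29) - (2 * n + 6) * (2 * n + 4)) ∧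
    (2 * n + 3 = (2 * n + 4) * (2 * n + 8) - (4 * n ^ 2 + 22 * n + 29) * 1) ∧
    ((2 * n + 3) * (2 * n + 5) - (4 * n ^ 2 + 16 * n + 13) =
        1 * (2 * n + 8) - (2 * n + 6) * 1) := by
  refine ⟨by ring, by ring, by ring, by ring, by ring, by ring, by ring, by ring, by ring⟩
end
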